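/- Let (A, ≺, ≻) be a dendriform algebra over a field of characteristic zero and D_1, D_2 : A → A commuting linear maps each of which is a derivation of both ≺ and ≻. Then a ≺_t b := Σ_{n≥0} (t^n/n!) D_1^n(a) ≺ D_2^n(b) and a ≻_t b := Σ_{n≥0} (t^n/n!) D_1^n(a) ≻ D_2^n(b) define a formal one-parameter deformation of A, i.e. (A[[t]], ≺_t, ≻_t) is a dendriform algebra over K[[t]]. -/

import Mathlib

section Aux


variable {K A : Type*} [Field K] [AddCommGroup A] [Module K A]

private lemma UDF.leibniz_pow (m : A →ₗ[K] A →ₗ[K] A) (D : Module.End K A)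
    (h : ∀ a b, D (m a b) = m (D a) b + m a (D b)) (n : ℕ) (a b : A) :
    (D ^ n) (m a b)
      = ∑ k ∈ Finset.range (n+1), (n.choose k) • m ((D^k) a) ((D^(n-k)) b) := by
  induction n generalizing a b with
  | zero => simp
  | succ n ih =>
    rw [pow_succ, Module.End.mul_apply, h, map_add, ih, ih]
    have h1 : ∀ (k : ℕ) (x : A), (D ^ k) (D x) = (D ^ (k+1)) x := by
      intro k x; rw [pow_succ, Module.End.mul_apply]
    simp only [h1]
    rw [Finset.sum_range_succ'
      (fun k => (n+1).choose k • (m ((D ^ k) a)) ((D ^ (n+1-k)) b)) (n+1)]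
    have e1 : ∀ k ∈ Finset.range (n+1),
        (n+1).choose (k+1) • (m ((D ^ (k+1)) a)) ((D ^ (n+1-(k+1))) b)
        = n.choose k • (m ((D ^ (k+1)) a)) ((D ^ (n-k)) b)
          + n.choose (k+1) • (m ((D ^ (k+1)) a)) ((D ^ (n-k)) b) := by
      intro k hk
      have hnk : n+1-(k+1) = n-k := by omega
      rw [hnk, Nat.choose_succ_succ, add_smul]
    rw [Finset.sum_congr rfl e1, Finset.sum_add_distrib]
    rw [Finset.sum_range_succ'
      (fun k => n.choose k • (m ((D ^ k) a)) ((D ^ (n-k+1)) b)) n]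
    have e2 : ∀ k ∈ Finset.range n,
        n.choose (k+1) • (m ((D ^ (k+1)) a)) ((D ^ (n-(k+1)+1)) b)
        = n.choose (k+1) • (m ((D ^ (k+1)) a)) ((D ^ (n-k)) b) := by
      intro k hk
      simp only [Finset.mem_range] at hk
      have hnk : n-(k+1)+1 = n-k := by omega
      rw [hnk]
    rw [Finset.sum_congr rfl e2]
    have e3 : ∑ k ∈ Finset.range (n+1), n.choose (k+1) • (m ((D ^ (k+1)) a)) ((D ^ (n-k)) b)
        = ∑ k ∈ Finset.range n, n.choose (k+1) • (m ((D ^ (k+1)) a)) ((D ^ (n-k)) b) := by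
      rw [Finset.sum_range_succ, Nat.choose_succ_self, zero_smul, add_zero]
    rw [e3]
    simp only [Nat.choose_zero_right, pow_zero, Nat.sub_zero, Module.End.one_apply, one_smul]
    abel

private lemma UDF.pow_comm_apply {D1 D2 : Module.End K A} (hcomm : D1 * D2 = D2 * D1)
    (i j : ℕ) (x : A) : (D2 ^ i) ((D1 ^ j) x) = (D1 ^ j) ((D2 ^ i) x) := by
  have h : D2 ^ i * D1 ^ j = D1 ^ j * D2 ^ i := (Commute.pow_pow hcomm.symm i j)
  calc (D2 ^ i) ((D1 ^ j) x) = (D2 ^ i * D1 ^ j) x := rfl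
    _ = (D1 ^ j * D2 ^ i) x := by rw [h]
    _ = (D1 ^ j) ((D2 ^ i) x) := rfl

private noncomputable def UDF.c3 (K : Type*) [Field K] (x y z : ℕ) : K :=
  ((x.factorial * y.factorial * z.factorial : ℕ) : K)⁻¹

private lemma UDF.c3_rotate (K : Type*) [Field K] (x y z : ℕ) :
    UDF.c3 K x y z = UDF.c3 K y z x := by
  unfold UDF.c3
  congr 1
  push_cast
  ring

private lemma UDF.coeff_eq [CharZero K] {k i : ℕ} (h : k ≤ i) (j : ℕ) :
    (i.factorial : K)⁻¹ * (j.factorial : K)⁻¹ * (i.choose k : K) = UDF.c3 K k (i-k) j := by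
  have key : (i.factorial : K) = (i.choose k : K) * k.factorial * (i-k).factorial := by
    exact_mod_cast congrArg (Nat.cast : ℕ → K) (Nat.choose_mul_factorial_mul_factorial h).symm
  unfold UDF.c3
  push_cast
  rw [key]
  have hC : (i.choose k : K) ≠ 0 := Nat.cast_ne_zero.2 (Nat.choose_pos h).ne'
  have hk : (k.factorial : K) ≠ 0 := Nat.cast_ne_zero.2 (Nat.factorial_ne_zero k)
  have hik : ((i-k).factorial : K) ≠ 0 := Nat.cast_ne_zero.2 (Nat.factorial_ne_zero (i-k))
  have hj : (j.factorial : K) ≠ 0 := Nat.cast_ne_zero.2 (Nat.factorial_ne_zero j)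
  field_simp

private lemma UDF.reindex (n : ℕ) (c : ℕ → ℕ → ℕ → K) (hc : ∀ x y z, c x y z = c y z x)
    (G : ℕ → ℕ → ℕ → ℕ → A) :
    ∑ i ∈ Finset.range (n+1), ∑ k ∈ Finset.range (i+1),
        c k (i-k) (n-i) • G (k+(n-i)) (i-k) (n-i) i
      = ∑ i ∈ Finset.range (n+1), ∑ k ∈ Finset.range (i+1),
        c k (i-k) (n-i) • G i (n-i) k (i-k+(n-i)) := by
  rw [Finset.sum_sigma', Finset.sum_sigma']
  refine Finset.sum_nbij' (fun q => ⟨q.2 + (n - q.1), n - q.1⟩)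
    (fun q => ⟨n - q.2, q.1 - q.2⟩) ?_ ?_ ?_ ?_ ?_
  · rintro ⟨i, k⟩ hq
    simp only [Finset.mem_sigma, Finset.mem_range] at hq ⊢
    omega
  · rintro ⟨i, k⟩ hq
    simp only [Finset.mem_sigma, Finset.mem_range] at hq ⊢
    omega
  · rintro ⟨i, k⟩ hq
    simp only [Finset.mem_sigma, Finset.mem_range] at hq
    dsimp only
    simp only [Sigma.mk.inj_iff, heq_eq_eq]
    constructor <;> omega
  · rintro ⟨i, k⟩ hq
    simp only [Finset.mem_sigma, Finset.mem_range] at hq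
    dsimp only
    simp only [Sigma.mk.inj_iff, heq_eq_eq]
    constructor <;> omega
  · rintro ⟨i, k⟩ hq
    simp only [Finset.mem_sigma, Finset.mem_range] at hq
    obtain ⟨hi, hk⟩ := hq
    dsimp only
    have e1 : n - (k + (n - i)) = i - k := by omega
    have e2 : k + (n - i) - (n - i) = k := by omega
    have e3 : k + (i - k) = i := by omega
    rw [e1, e2, e3, show c (n-i) k (i-k) = c k (i-k) (n-i) from hc _ _ _]

private lemma UDF.E1 [CharZero K] (u w : A →ₗ[K] A →ₗ[K] A) (D1 D2 : Module.End K A)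
    (hw : ∀ a b, D1 (w a b) = w (D1 a) b + w a (D1 b))
    (i j : ℕ) (a b c : A) :
    (i.factorial : K)⁻¹ •
        u ((D1 ^ i) ((j.factorial : K)⁻¹ • w ((D1 ^ j) a) ((D2 ^ j) b))) ((D2 ^ i) c)
      = ∑ k ∈ Finset.range (i+1),
          UDF.c3 K k (i-k) j • u (w ((D1 ^ (k+j)) a) ((D1 ^ (i-k)) ((D2 ^ j) b))) ((D2 ^ i) c) := by
  rw [map_smul, UDF.leibniz_pow w D1 hw i]
  have e : ∀ k, (D1 ^ k) ((D1 ^ j) a) = (D1 ^ (k+j)) a := by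
    intro k; rw [pow_add, Module.End.mul_apply]
  simp only [e, map_smul, map_sum, LinearMap.smul_apply, LinearMap.sum_apply,
    LinearMap.coe_sum, Finset.smul_sum, map_nsmul, LinearMap.map_smul_of_tower]
  refine Finset.sum_congr rfl (fun k hk => ?_)
  simp only [Finset.mem_range] at hk
  rw [← Nat.cast_smul_eq_nsmul K, ← UDF.coeff_eq (by omega : k ≤ i) j, mul_smul]
  module

private lemma UDF.E2 [CharZero K] (u w : A →ₗ[K] A →ₗ[K] A) (D1 D2 : Module.End K A)
    (hcomm : D1 * D2 = D2 * D1)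
    (hw : ∀ a b, D2 (w a b) = w (D2 a) b + w a (D2 b))
    (i j : ℕ) (a b c : A) :
    (i.factorial : K)⁻¹ •
        u ((D1 ^ i) a) ((D2 ^ i) ((j.factorial : K)⁻¹ • w ((D1 ^ j) b) ((D2 ^ j) c)))
      = ∑ k ∈ Finset.range (i+1),
          UDF.c3 K k (i-k) j • u ((D1 ^ i) a) (w ((D1 ^ j) ((D2 ^ k) b)) ((D2 ^ ((i-k)+j)) c)) := by
  rw [map_smul, UDF.leibniz_pow w D2 hw i]
  have e : ∀ k, (D2 ^ k) ((D2 ^ j) c) = (D2 ^ (k+j)) c := by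
    intro k; rw [pow_add, Module.End.mul_apply]
  have e2 : ∀ k, (D2 ^ k) ((D1 ^ j) b) = (D1 ^ j) ((D2 ^ k) b) := fun k =>
    UDF.pow_comm_apply hcomm k j b
  simp only [e, e2, map_smul, map_sum, LinearMap.smul_apply, LinearMap.sum_apply,
    LinearMap.coe_sum, Finset.smul_sum, map_nsmul, LinearMap.map_smul_of_tower]
  refine Finset.sum_congr rfl (fun k hk => ?_)
  simp only [Finset.mem_range] at hk
  rw [← Nat.cast_smul_eq_nsmul K, ← UDF.coeff_eq (by omega : k ≤ i) j, mul_smul]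
  module

end Aux


section

variable {K A : Type*} [Field K] [AddCommGroup A] [Module K A]

/-- Components of the circle product `f ∘ g = f ∘₁ g - f ∘₂ g` of 2-cochains
in the dendriform operad, at the three labels of `C₃`; the vanishing of
`Σ_{i+j=n} π_i ∘ π_j` for all `n` expresses that `(≺_t, ≻_t)` with
`≺_t = Σ π_i([1]) tⁱ`, `≻_t = Σ π_i([2]) tⁱ` is a dendriform structure on
`A[[t]]`, i.e. a formal deformation. -/
def circ2_0 (f g : ℕ → A → A → A) (a b c : A) : A :=
  f 0 (g 0 a b) c - f 0 a (g 0 b c + g 1 b c)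

def circ2_1 (f g : ℕ → A → A → A) (a b c : A) : A :=
  f 0 (g 1 a b) c - f 1 a (g 0 b c)

def circ2_2 (f g : ℕ → A → A → A) (a b c : A) : A :=
  f 1 (g 0 a b + g 1 a b) c - f 1 a (g 1 b c)

/-- The coefficients of the universal deformation formula:
`π_i([1]; a, b) = (1/i!) D₁ⁱ(a) ≺ D₂ⁱ(b)` and
`π_i([2]; a, b) = (1/i!) D₁ⁱ(a) ≻ D₂ⁱ(b)`. -/
def udfPi (p s : A →ₗ[K] A →ₗ[K] A) (D1 D2 : Module.End K A) :
    ℕ → ℕ → A → A → A :=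
  fun i r a b =>
    ((i.factorial : K)⁻¹) •
      (if r = 0 then p ((D1 ^ i) a) ((D2 ^ i) b) else s ((D1 ^ i) a) ((D2 ^ i) b))

end

/-- let `(A, ≺ = p, ≻ = s)` be a dendriform algebra over a field
of characteristic zero, and let `D₁, D₂` be commuting linear maps, each a
derivation for both `≺` and `≻`.  Then
`a ≺_t b = Σ (tⁿ/n!) D₁ⁿ(a) ≺ D₂ⁿ(b)`, `a ≻_t b = Σ (tⁿ/n!) D₁ⁿ(a) ≻ D₂ⁿ(b)`
define a formal one-parameter deformation of `A`: the dendriform identities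
hold in `A[[t]]`, i.e. `Σ_{i+j=n} π_i ∘ π_j = 0` for every `n`. -/
theorem universal_deformation_formula
    {K A : Type*} [Field K] [CharZero K] [AddCommGroup A] [Module K A]
    (p s : A →ₗ[K] A →ₗ[K] A)
    (hd1 : ∀ a b c : A, p (p a b) c = p a (p b c + s b c))
    (hd2 : ∀ a b c : A, p (s a b) c = s a (p b c))
    (hd3 : ∀ a b c : A, s (p a b + s a b) c = s a (s b c))
    (D1 D2 : Module.End K A)
    (hder1p : ∀ a b : A, D1 (p a b) = p (D1 a) b + p a (D1 b))
    (hder1s : ∀ a b : A, D1 (s a b) = s (D1 a) b + s a (D1 b))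
    (hder2p : ∀ a b : A, D2 (p a b) = p (D2 a) b + p a (D2 b))
    (hder2s : ∀ a b : A, D2 (s a b) = s (D2 a) b + s a (D2 b))
    (hcomm : D1 * D2 = D2 * D1) :
    (∀ (n : ℕ) (a b c : A),
      ∑ i ∈ Finset.range (n + 1),
        circ2_0 (udfPi p s D1 D2 i) (udfPi p s D1 D2 (n - i)) a b c = 0) ∧
    (∀ (n : ℕ) (a b c : A),
      ∑ i ∈ Finset.range (n + 1),
        circ2_1 (udfPi p s D1 D2 i) (udfPi p s D1 D2 (n - i)) a b c = 0) ∧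
    (∀ (n : ℕ) (a b c : A),
      ∑ i ∈ Finset.range (n + 1),
        circ2_2 (udfPi p s D1 D2 i) (udfPi p s D1 D2 (n - i)) a b c = 0) := by
  refine ⟨?_, ?_, ?_⟩
  · -- identity 1
    intro n a b c
    simp only [circ2_0, udfPi, reduceIte, one_ne_zero, ite_false, Finset.sum_sub_distrib]
    rw [sub_eq_zero]
    have h1 : ∀ i ∈ Finset.range (n+1),
        ((i.factorial : K)⁻¹ •
          p ((D1 ^ i) (((n-i).factorial : K)⁻¹ •
              p ((D1 ^ (n-i)) a) ((D2 ^ (n-i)) b))) ((D2 ^ i) c))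
        = ∑ k ∈ Finset.range (i+1), UDF.c3 K k (i-k) (n-i) •
            p ((D1 ^ (k+(n-i))) a)
              (p ((D1 ^ (i-k)) ((D2 ^ (n-i)) b)) ((D2 ^ i) c)
                + s ((D1 ^ (i-k)) ((D2 ^ (n-i)) b)) ((D2 ^ i) c)) := by
      intro i _
      rw [UDF.E1 p p D1 D2 hder1p i (n-i) a b c]
      exact Finset.sum_congr rfl fun k _ => by rw [hd1]
    have h2 : ∀ i ∈ Finset.range (n+1),
        ((i.factorial : K)⁻¹ •
          p ((D1 ^ i) a) ((D2 ^ i)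
            (((n-i).factorial : K)⁻¹ • p ((D1 ^ (n-i)) b) ((D2 ^ (n-i)) c)
              + ((n-i).factorial : K)⁻¹ • s ((D1 ^ (n-i)) b) ((D2 ^ (n-i)) c))))
        = ∑ k ∈ Finset.range (i+1), UDF.c3 K k (i-k) (n-i) •
            p ((D1 ^ i) a)
              (p ((D1 ^ (n-i)) ((D2 ^ k) b)) ((D2 ^ ((i-k)+(n-i))) c)
                + s ((D1 ^ (n-i)) ((D2 ^ k) b)) ((D2 ^ ((i-k)+(n-i))) c)) := by
      intro i _
      rw [map_add, map_add, smul_add,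
        UDF.E2 p p D1 D2 hcomm hder2p i (n-i) a b c,
        UDF.E2 p s D1 D2 hcomm hder2s i (n-i) a b c,
        ← Finset.sum_add_distrib]
      exact Finset.sum_congr rfl fun k _ => by rw [map_add, smul_add]
    rw [Finset.sum_congr rfl h1, Finset.sum_congr rfl h2]
    exact UDF.reindex n (UDF.c3 K) (UDF.c3_rotate K)
      (fun α β1 β2 γ => p ((D1 ^ α) a)
        (p ((D1 ^ β1) ((D2 ^ β2) b)) ((D2 ^ γ) c)
          + s ((D1 ^ β1) ((D2 ^ β2) b)) ((D2 ^ γ) c)))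
  · -- identity 2
    intro n a b c
    simp only [circ2_1, udfPi, reduceIte, one_ne_zero, ite_false, Finset.sum_sub_distrib]
    rw [sub_eq_zero]
    have h1 : ∀ i ∈ Finset.range (n+1),
        ((i.factorial : K)⁻¹ •
          p ((D1 ^ i) (((n-i).factorial : K)⁻¹ •
              s ((D1 ^ (n-i)) a) ((D2 ^ (n-i)) b))) ((D2 ^ i) c))
        = ∑ k ∈ Finset.range (i+1), UDF.c3 K k (i-k) (n-i) •
            s ((D1 ^ (k+(n-i))) a)
              (p ((D1 ^ (i-k)) ((D2 ^ (n-i)) b)) ((D2 ^ i) c)) := by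
      intro i _
      rw [UDF.E1 p s D1 D2 hder1s i (n-i) a b c]
      exact Finset.sum_congr rfl fun k _ => by rw [hd2]
    have h2 : ∀ i ∈ Finset.range (n+1),
        ((i.factorial : K)⁻¹ •
          s ((D1 ^ i) a) ((D2 ^ i)
            (((n-i).factorial : K)⁻¹ • p ((D1 ^ (n-i)) b) ((D2 ^ (n-i)) c))))
        = ∑ k ∈ Finset.range (i+1), UDF.c3 K k (i-k) (n-i) •
            s ((D1 ^ i) a)
              (p ((D1 ^ (n-i)) ((D2 ^ k) b)) ((D2 ^ ((i-k)+(n-i))) c)) := by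
      intro i _
      rw [UDF.E2 s p D1 D2 hcomm hder2p i (n-i) a b c]
    rw [Finset.sum_congr rfl h1, Finset.sum_congr rfl h2]
    exact UDF.reindex n (UDF.c3 K) (UDF.c3_rotate K)
      (fun α β1 β2 γ => s ((D1 ^ α) a)
        (p ((D1 ^ β1) ((D2 ^ β2) b)) ((D2 ^ γ) c)))
  · -- identity 3
    intro n a b c
    simp only [circ2_2, udfPi, reduceIte, one_ne_zero, ite_false, Finset.sum_sub_distrib]
    rw [sub_eq_zero]
    have h1 : ∀ i ∈ Finset.range (n+1),
        ((i.factorial : K)⁻¹ •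
          s ((D1 ^ i)
            (((n-i).factorial : K)⁻¹ • p ((D1 ^ (n-i)) a) ((D2 ^ (n-i)) b)
              + ((n-i).factorial : K)⁻¹ • s ((D1 ^ (n-i)) a) ((D2 ^ (n-i)) b)))
            ((D2 ^ i) c))
        = ∑ k ∈ Finset.range (i+1), UDF.c3 K k (i-k) (n-i) •
            s ((D1 ^ (k+(n-i))) a)
              (s ((D1 ^ (i-k)) ((D2 ^ (n-i)) b)) ((D2 ^ i) c)) := by
      intro i _
      rw [map_add, map_add, LinearMap.add_apply, smul_add,
        UDF.E1 s p D1 D2 hder1p i (n-i) a b c,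
        UDF.E1 s s D1 D2 hder1s i (n-i) a b c,
        ← Finset.sum_add_distrib]
      refine Finset.sum_congr rfl fun k _ => ?_
      rw [← smul_add, ← LinearMap.add_apply, ← map_add, hd3]
    have h2 : ∀ i ∈ Finset.range (n+1),
        ((i.factorial : K)⁻¹ •
          s ((D1 ^ i) a) ((D2 ^ i)
            (((n-i).factorial : K)⁻¹ • s ((D1 ^ (n-i)) b) ((D2 ^ (n-i)) c))))
        = ∑ k ∈ Finset.range (i+1), UDF.c3 K k (i-k) (n-i) •
            s ((D1 ^ i) a)
              (s ((D1 ^ (n-i)) ((D2 ^ k) b)) ((D2 ^ ((i-k)+(n-i))) c)) := by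
      intro i _
      rw [UDF.E2 s s D1 D2 hcomm hder2s i (n-i) a b c]
    rw [Finset.sum_congr rfl h1, Finset.sum_congr rfl h2]
    exact UDF.reindex n (UDF.c3 K) (UDF.c3_rotate K)
      (fun α β1 β2 γ => s ((D1 ^ α) a)
        (s ((D1 ^ β1) ((D2 ^ β2) b)) ((D2 ^ γ) c)))
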